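/- arXiv:2605.03867 — 2 statements merged into one kernel-verified Lean document; each statement's English description precedes it below -/
import Mathlib

section
/- Let d ≥ 1 and n ≥ 2 be integers, and let G be a random n×d matrix whose entries are independent Gaussian random variables with mean 0 and variance 1/n, with rows g_1,…,g_n. Then E[ max_{1 ≤ i ≤ n} ‖g_i‖ ] ≤ sqrt( (4 ln n + 4 sqrt(d ln n) + 2d) / (2n) ) + 1 / sqrt(2 n ln n). -/
/-!
For `t, a > 0` and every real `y`, `y ≤ a + exp (t (y² - a²)) / (2ta)`, by `t (y - a)² ≥ 0` and
`x ≤ exp x`. Bounding the maximum of the row norms by the sum of these exponentials gives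
`E maxᵢ ‖gᵢ‖ ≤ a + n (1 - 2t/n)^(-d/2) exp (-t a²) / (2ta)`, because `‖gᵢ‖²` is a sum of `d`
independent squares and `E exp (t x²) = (1 - 2tv)^(-1/2)` for `x ~ N(0, v)`.
With `p = √(ln n)`, `q = √d`, `a² = ((q + p)² + p²) / n` and `t = n p / (q + 2p)`, the bound
`log x ≤ sinh (log x)` makes `n (1 - 2t/n)^(-d/2) exp (-t a²) ≤ 1`, and `2ta ≥ √(2n ln n)`.
-/

open MeasureTheory ProbabilityTheory Real Finset
open scoped NNReal

lemma Real.log_le_sub_inv_div_two {x : ℝ} (hx : 1 ≤ x) : log x ≤ (x - x⁻¹) / 2 := by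
  rw [← sinh_log (by positivity)]
  exact self_le_sinh_iff.2 (log_nonneg hx)

lemma le_add_exp_mul_sq_sub_sq_div {t a : ℝ} (ht : 0 < t) (ha : 0 < a) (y : ℝ) :
    y ≤ a + exp (t * (y ^ 2 - a ^ 2)) / (2 * t * a) := by
  have htangent : 2 * t * a * (y - a) ≤ t * (y ^ 2 - a ^ 2) := by nlinarith [sq_nonneg (y - a)]
  have hexp := add_one_le_exp (t * (y ^ 2 - a ^ 2))
  rw [← sub_le_iff_le_add', le_div_iff₀' (by positivity)]
  linarith

theorem integral_iSup_le_of_integral_exp_mul_sq_le {Ω ι : Type*} [MeasurableSpace Ω]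
    {μ : Measure Ω} [IsProbabilityMeasure μ] [Fintype ι] {X : ι → Ω → ℝ}
    (hX : ∀ i ω, 0 ≤ X i ω) {t a K : ℝ} (ht : 0 < t) (ha : 0 < a)
    (hint : ∀ i, Integrable (fun ω ↦ exp (t * X i ω ^ 2)) μ)
    (hK : ∀ i, ∫ ω, exp (t * X i ω ^ 2) ∂μ ≤ K) :
    ∫ ω, ⨆ i, X i ω ∂μ ≤ a + Fintype.card ι * K * exp (-(t * a ^ 2)) / (2 * t * a) := by
  set C := exp (-(t * a ^ 2)) / (2 * t * a)
  have hpoint : ∀ ω, ⨆ i, X i ω ≤ a + C * ∑ i, exp (t * X i ω ^ 2) := fun ω ↦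
    Real.iSup_le (fun i ↦ calc
      X i ω ≤ a + exp (t * (X i ω ^ 2 - a ^ 2)) / (2 * t * a) :=
        le_add_exp_mul_sq_sub_sq_div ht ha _
      _ = a + C * exp (t * X i ω ^ 2) := by
        rw [mul_sub, sub_eq_add_neg, exp_add]; ring
      _ ≤ a + C * ∑ i, exp (t * X i ω ^ 2) := by
        gcongr
        exact single_le_sum (f := fun j ↦ exp (t * X j ω ^ 2)) (fun j _ ↦ (exp_pos _).le)
          (mem_univ i)) (by positivity)
  have hsum : Integrable (fun ω ↦ ∑ i, exp (t * X i ω ^ 2)) μ :=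
    integrable_finsetSum _ fun i _ ↦ hint i
  calc ∫ ω, ⨆ i, X i ω ∂μ ≤ ∫ ω, a + C * ∑ i, exp (t * X i ω ^ 2) ∂μ :=
        integral_mono_of_nonneg (ae_of_all _ fun ω ↦ Real.iSup_nonneg fun i ↦ hX i ω)
          ((integrable_const a).add (hsum.const_mul C)) (ae_of_all _ hpoint)
    _ = a + C * ∑ i, ∫ ω, exp (t * X i ω ^ 2) ∂μ := by
        rw [integral_add (integrable_const a) (hsum.const_mul C), integral_const_mul,
          integral_finsetSum _ fun i _ ↦ hint i]
        simp
    _ ≤ a + C * ∑ _i : ι, K := by gcongr with i; exact hK i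
    _ = a + Fintype.card ι * K * exp (-(t * a ^ 2)) / (2 * t * a) := by
        rw [sum_const, card_univ, nsmul_eq_mul]; ring

theorem integral_exp_mul_sq_gaussianReal {v : ℝ≥0} {t : ℝ} (htv : 2 * t * v < 1) :
    ∫ x, exp (t * x ^ 2) ∂gaussianReal 0 v = (√(1 - 2 * t * v))⁻¹ := by
  rcases eq_or_ne v 0 with rfl | hv
  · simp [gaussianReal_zero_var]
  set b := (2 * (v : ℝ))⁻¹ - t
  have hvb : 2 * v * b = 1 - 2 * t * v := by simp only [b]; field_simp
  have hb : 0 < b := by nlinarith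
  have hdensity : ∀ x, gaussianPDFReal 0 v x • exp (t * x ^ 2)
      = (√(2 * π * v))⁻¹ * exp (-b * x ^ 2) := by
    intro x
    rw [gaussianPDFReal, smul_eq_mul, mul_assoc, ← exp_add]
    congr 2
    simp only [b]
    field_simp
    ring
  rw [integral_gaussianReal_eq_integral_smul hv]
  simp_rw [hdensity]
  rw [integral_const_mul, integral_gaussian, ← hvb, ← sqrt_inv, ← sqrt_mul (by positivity),
    ← sqrt_inv]
  congr 1
  field_simp

theorem integral_exp_mul_sum_sq_gaussianReal {κ : Type*} [Fintype κ] {v : ℝ≥0} {t : ℝ}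
    (htv : 2 * t * v < 1) :
    ∫ y : κ → ℝ, exp (t * ∑ j, y j ^ 2) ∂Measure.pi (fun _ ↦ gaussianReal 0 v)
      = (√(1 - 2 * t * v))⁻¹ ^ Fintype.card κ := by
  simp_rw [mul_sum, exp_sum]
  rw [integral_fintype_prod_eq_pow (fun x ↦ exp (t * x ^ 2)), integral_exp_mul_sq_gaussianReal htv]

theorem integrable_exp_mul_sum_sq_gaussianReal {κ : Type*} [Fintype κ] {v : ℝ≥0} {t : ℝ}
    (htv : 2 * t * v < 1) :
    Integrable (fun y : κ → ℝ ↦ exp (t * ∑ j, y j ^ 2)) (Measure.pi fun _ ↦ gaussianReal 0 v) :=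
  .of_integral_ne_zero <| by
    rw [integral_exp_mul_sum_sq_gaussianReal htv]
    exact pow_ne_zero _ (inv_ne_zero (sqrt_ne_zero'.2 (by linarith)))

theorem integral_iSup_sqrt_sum_sq_gaussianReal_le {ι κ : Type*} [Fintype ι] [Fintype κ]
    {v : ℝ≥0} {t a : ℝ} (ht : 0 < t) (htv : 2 * t * v < 1) (ha : 0 < a) :
    ∫ G : ι → κ → ℝ, ⨆ i, √(∑ j, G i j ^ 2)
        ∂Measure.pi (fun _ ↦ Measure.pi fun _ ↦ gaussianReal 0 v)
      ≤ a + Fintype.card ι * (√(1 - 2 * t * v))⁻¹ ^ Fintype.card κ * exp (-(t * a ^ 2))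
          / (2 * t * a) := by
  have hsq : ∀ (G : ι → κ → ℝ) i, √(∑ j, G i j ^ 2) ^ 2 = ∑ j, G i j ^ 2 := fun G i ↦
    sq_sqrt (sum_nonneg fun j _ ↦ sq_nonneg _)
  set ν : Measure (κ → ℝ) := Measure.pi fun _ ↦ gaussianReal 0 v
  refine integral_iSup_le_of_integral_exp_mul_sq_le (fun i G ↦ sqrt_nonneg _) ht ha
    (fun i ↦ ?_) (fun i ↦ le_of_eq ?_)
  · simp_rw [hsq]
    exact integrable_comp_eval (μ := fun _ : ι ↦ ν) (i := i)
      (integrable_exp_mul_sum_sq_gaussianReal htv)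
  · simp_rw [hsq]
    rw [integral_comp_eval (μ := fun _ : ι ↦ ν) (i := i)
      (integrable_exp_mul_sum_sq_gaussianReal htv).aestronglyMeasurable,
      integral_exp_mul_sum_sq_gaussianReal htv]

lemma sq_sub_mul_log_le {p q : ℝ} (hp : 0 < p) (hq : 0 < q) :
    p ^ 2 - q ^ 2 / 2 * log (1 - 2 * (p / (q + 2 * p)))
      ≤ p / (q + 2 * p) * ((q + p) ^ 2 + p ^ 2) := by
  have hy : 1 - 2 * (p / (q + 2 * p)) = ((q + 2 * p) / q)⁻¹ := by field_simp; ring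
  have hlog := log_le_sub_inv_div_two (x := (q + 2 * p) / q) (by rw [le_div_iff₀ hq]; linarith)
  rw [hy, log_inv]
  calc p ^ 2 - q ^ 2 / 2 * -log ((q + 2 * p) / q)
      ≤ p ^ 2 + q ^ 2 / 2 * (((q + 2 * p) / q - ((q + 2 * p) / q)⁻¹) / 2) := by
        nlinarith [sq_nonneg q]
    _ = p / (q + 2 * p) * ((q + p) ^ 2 + p ^ 2) := by field_simp; ring

lemma sqrt_two_mul_sq_le {p q N : ℝ} (hp : 0 < p) (hq : 0 < q) (hN : 0 < N) :
    √(2 * N * p ^ 2) ≤ 2 * (p / (q + 2 * p) * N) * √(((q + p) ^ 2 + p ^ 2) / N) := by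
  rw [← sqrt_sq (by positivity : 0 ≤ 2 * (p / (q + 2 * p) * N)), ← sqrt_mul (by positivity)]
  apply sqrt_le_sqrt
  rw [show (2 * (p / (q + 2 * p) * N)) ^ 2 * (((q + p) ^ 2 + p ^ 2) / N)
      = 2 * N * p ^ 2 * ((2 * (q + p) ^ 2 + 2 * p ^ 2) / (q + 2 * p) ^ 2) by field_simp]
  refine le_mul_of_one_le_right (by positivity) ?_
  rw [one_le_div (by positivity)]
  nlinarith [sq_nonneg q]

theorem mul_inv_sqrt_pow_mul_exp_le_one {p q N : ℝ} (hp : 0 < p) (hq : 0 < q)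
    (hN : N = exp (p ^ 2)) {d : ℕ} (hd : (d : ℝ) = q ^ 2) :
    N * (√(1 - 2 * (p / (q + 2 * p))))⁻¹ ^ d
        * exp (-(p / (q + 2 * p) * N * √(((q + p) ^ 2 + p ^ 2) / N) ^ 2)) ≤ 1 := by
  set lam := p / (q + 2 * p)
  have hy : 0 < 1 - 2 * lam := by
    rw [sub_pos, mul_div_assoc', div_lt_one (by positivity)]; linarith
  have hpow : (√(1 - 2 * lam))⁻¹ ^ d = exp (-(q ^ 2 / 2 * log (1 - 2 * lam))) := by
    rw [← exp_log (pow_pos (inv_pos.2 (sqrt_pos.2 hy)) d), log_pow, log_inv, log_sqrt hy.le, hd]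
    ring_nf
  have hexponent :
      lam * N * √(((q + p) ^ 2 + p ^ 2) / N) ^ 2 = lam * ((q + p) ^ 2 + p ^ 2) := by
    rw [sq_sqrt (by rw [hN]; positivity), hN]; field_simp
  rw [hpow, hexponent, hN, ← exp_add, ← exp_add, exp_le_one_iff]
  linarith [sq_sub_mul_log_le hp hq]

/-- **Expected maximal row norm of a Gaussian matrix.**
Let `G` be a random `n × d` matrix whose entries are i.i.d. `N(0, 1/n)` Gaussian random
variables (modeled as the product measure over all entries of `gaussianReal 0 (1/n)`).
Then `E[max_{1 ≤ i ≤ n} ‖g_i‖] ≤ √((4 ln n + 4√(d ln n) + 2d)/(2n)) + 1/√(2n ln n)`,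
where `g_i` denotes the `i`-th row of `G`. -/
theorem gaussian_expected_max_row_norm
    (d n : ℕ) (hd : 1 ≤ d) (hn : 2 ≤ n) :
    (∫ G : Fin n → Fin d → ℝ,
        (⨆ i : Fin n, Real.sqrt (∑ j : Fin d, (G i j) ^ 2))
        ∂(Measure.pi fun _ : Fin n =>
            Measure.pi fun _ : Fin d => gaussianReal 0 ((n : NNReal))⁻¹))
      ≤ Real.sqrt ((4 * Real.log n + 4 * Real.sqrt (d * Real.log n) + 2 * d) / (2 * n))
          + 1 / Real.sqrt (2 * n * Real.log n) := by
  have hn0 : (0 : ℝ) < n := by positivity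
  have hlog : 0 < log n := log_pos (by exact_mod_cast hn)
  set p := √(log n)
  set q := √(d : ℝ)
  have hp : 0 < p := sqrt_pos.2 hlog
  have hq : 0 < q := sqrt_pos.2 (by exact_mod_cast hd)
  set lam := p / (q + 2 * p)
  set a := √(((q + p) ^ 2 + p ^ 2) / n) with ha
  have hvar : 2 * (lam * n) * ((n : ℝ≥0)⁻¹ : ℝ≥0) = 2 * lam := by push_cast; field_simp
  have hvar_lt : 2 * (lam * n) * ((n : ℝ≥0)⁻¹ : ℝ≥0) < 1 := by
    rw [hvar, mul_div_assoc', div_lt_one (by positivity)]; linarith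
  have ha' : a = √((4 * log n + 4 * √(d * log n) + 2 * d) / (2 * n)) := by
    rw [ha, sqrt_mul (Nat.cast_nonneg d)]
    congr 1
    rw [add_sq, sq_sqrt hlog.le, sq_sqrt (Nat.cast_nonneg d)]
    field_simp
    ring
  calc _ ≤ a + n * (√(1 - 2 * lam))⁻¹ ^ d * exp (-(lam * n * a ^ 2))
          / (2 * (lam * n) * a) := by
        simpa only [hvar, Fintype.card_fin] using integral_iSup_sqrt_sum_sq_gaussianReal_le
          (ι := Fin n) (κ := Fin d) (a := a) (by positivity) hvar_lt (by positivity)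
    _ ≤ a + 1 / (2 * (lam * n) * a) := by
        gcongr
        exact mul_inv_sqrt_pow_mul_exp_le_one hp hq (by rw [sq_sqrt hlog.le, exp_log hn0])
          (sq_sqrt (Nat.cast_nonneg d)).symm
    _ ≤ a + 1 / √(2 * n * p ^ 2) := by
        gcongr
        exact sqrt_two_mul_sq_le hp hq hn0
    _ = _ := by rw [ha', sq_sqrt hlog.le]
end

section
/- Let ε ∈ (0,1) and let k ≥ 1 be a real number. Then ( (1+ε)^{k+1} − (1−ε)^{k+1} ) / ( (1+ε)^{k} − (1−ε)^{k} ) ≤ (1+ε) + (1−ε)/k. -/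
/-!
With `a = 1 + ε > b = 1 - ε > 0`, clearing the denominator turns the claim into
`k b^(k-1) (a - b) ≤ a^k - b^k`, the tangent-line inequality for the convex function `x ↦ x^k`
at `b`, which is Bernoulli's inequality `1 + k s ≤ (1 + s)^k` for `s = a / b - 1`.
-/

open Real

lemma rpow_add_mul_rpow_sub_one_mul_sub_le_rpow {a b k : ℝ} (ha : 0 ≤ a) (hb : 0 < b)
    (hk : 1 ≤ k) : b ^ k + k * b ^ (k - 1) * (a - b) ≤ a ^ k := by
  have hbern : 1 + k * (a / b - 1) ≤ a ^ k / b ^ k := by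
    rw [← div_rpow ha hb.le]
    have hs : -1 ≤ a / b - 1 := by linarith [div_nonneg ha hb.le]
    simpa using one_add_mul_self_le_rpow_one_add hs hk
  have hbk : 0 < b ^ k := rpow_pos_of_pos hb k
  calc b ^ k + k * b ^ (k - 1) * (a - b) = (1 + k * (a / b - 1)) * b ^ k := by
        rw [rpow_sub_one hb.ne']
        field_simp
    _ ≤ a ^ k / b ^ k * b ^ k := mul_le_mul_of_nonneg_right hbern hbk.le
    _ = a ^ k := div_mul_cancel₀ _ hbk.ne'

lemma rpow_add_one_sub_rpow_add_one_div_rpow_sub_rpow_le {a b k : ℝ} (hb : 0 < b) (hba : b < a)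
    (hk : 1 ≤ k) : (a ^ (k + 1) - b ^ (k + 1)) / (a ^ k - b ^ k) ≤ a + b / k := by
  have ha : 0 < a := hb.trans hba
  have hden : 0 < a ^ k - b ^ k := sub_pos.2 (rpow_lt_rpow hb.le hba (by linarith))
  have htangent := rpow_add_mul_rpow_sub_one_mul_sub_le_rpow ha.le hb hk
  have hgap : (a + b / k) * (a ^ k - b ^ k) - (a ^ (k + 1) - b ^ (k + 1))
      = b / k * (a ^ k - (b ^ k + k * b ^ (k - 1) * (a - b))) := by
    rw [rpow_add_one ha.ne', rpow_add_one hb.ne', rpow_sub_one hb.ne']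
    field_simp
    ring
  rw [div_le_iff₀ hden, ← sub_nonneg, hgap]
  exact mul_nonneg (by positivity) (sub_nonneg.2 htangent)

/-- **An elementary ratio inequality.**
For `ε ∈ (0,1)` and a real number `k ≥ 1`,
`((1+ε)^{k+1} - (1-ε)^{k+1}) / ((1+ε)^k - (1-ε)^k) ≤ (1+ε) + (1-ε)/k`. -/
theorem ratio_power_bound (ε k : ℝ) (hε : ε ∈ Set.Ioo (0 : ℝ) 1) (hk : 1 ≤ k) :
    ((1 + ε) ^ (k + 1) - (1 - ε) ^ (k + 1)) / ((1 + ε) ^ k - (1 - ε) ^ k)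
      ≤ (1 + ε) + (1 - ε) / k := by
  obtain ⟨hε0, hε1⟩ := hε
  exact rpow_add_one_sub_rpow_add_one_div_rpow_sub_rpow_le (by linarith) (by linarith) hk
end
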